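/- arXiv:1202.3913 — 9 statements merged into one kernel-verified Lean document; each statement's English description precedes it below -/
import Mathlib

section
/- Let q ≥ 1 and let λ_1 ≥ λ_2 ≥ ... ≥ λ_q > 0 be real numbers. Then there exists a unique integer r with 1 ≤ r ≤ q such that: for every k with 1 ≤ k ≤ r, 1/λ_k < (1/k)(1 + Σ_{j=1}^k 1/λ_j), while for every k with r < k ≤ q, 1/λ_k ≥ (1/k)(1 + Σ_{j=1}^k 1/λ_j). -/
/-!
With `μ_j = 1/λ_j` nondecreasing, the condition `μ_k ≥ (1 + μ_1 + ⋯ + μ_k)/k` fails at `k = 1`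
and, once it holds at `k`, it persists at `k + 1`: adding `μ_{k+1} ≥ μ_k` to both sides of
`1 + μ_1 + ⋯ + μ_k ≤ k μ_k ≤ k μ_{k+1}` gives the condition at `k + 1`. So the indices where the
strict inequality holds form an initial segment `{1, …, r}` of `{1, …, q}`, and `r` is its
last element.
-/

theorem existsUnique_initialSegment_of_succ_imp (P : ℕ → Prop) (q : ℕ) (hq : 1 ≤ q) (h1 : P 1)
    (hsucc : ∀ k, 1 ≤ k → k + 1 ≤ q → P (k + 1) → P k) :
    ∃! r : ℕ, (1 ≤ r ∧ r ≤ q) ∧ (∀ k, 1 ≤ k → k ≤ r → P k) ∧ (∀ k, r < k → k ≤ q → ¬ P k) := by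
  classical
  have hdown : ∀ j, 1 ≤ j → ∀ k, j ≤ k → k ≤ q → P k → P j := by
    intro j hj k hjk
    induction k, hjk using Nat.le_induction with
    | base => exact fun _ hP => hP
    | succ n hjn ih => exact fun hnq hP => ih (by omega) (hsucc n (by omega) hnq hP)
  set r := Nat.findGreatest P q
  have hr1 : 1 ≤ r := Nat.le_findGreatest hq h1
  have hrq : r ≤ q := Nat.findGreatest_le q
  have hrP : P r := Nat.findGreatest_spec hq h1
  refine ⟨r, ⟨⟨hr1, hrq⟩, ?_, ?_⟩, ?_⟩
  · exact fun k hk hkr => hdown k hk r hkr hrq hrP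
  · exact fun k hrk hkq => Nat.findGreatest_is_greatest hrk hkq
  · rintro s ⟨⟨hs1, hsq⟩, hsP, hsnP⟩
    rcases lt_trichotomy s r with hsr | hsr | hsr
    · exact absurd hrP (hsnP r hsr hrq)
    · exact hsr
    · exact absurd (hsP s hs1 le_rfl) (Nat.findGreatest_is_greatest hsr hsq)

noncomputable def witsenhausenMean (lam : ℕ → ℝ) (k : ℕ) : ℝ :=
  (1 / (k : ℝ)) * (1 + ∑ j ∈ Finset.Icc 1 k, 1 / lam j)

theorem inv_lt_witsenhausenMean_one (lam : ℕ → ℝ) : 1 / lam 1 < witsenhausenMean lam 1 := by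
  simp [witsenhausenMean]

theorem witsenhausenMean_succ_le {lam : ℕ → ℝ} {k : ℕ} (hk : 1 ≤ k) (hpos : 0 < lam (k + 1))
    (hmono : lam (k + 1) ≤ lam k) (h : witsenhausenMean lam k ≤ 1 / lam k) :
    witsenhausenMean lam (k + 1) ≤ 1 / lam (k + 1) := by
  have hk0 : (0 : ℝ) < k := by exact_mod_cast hk
  have hinv : 1 / lam k ≤ 1 / lam (k + 1) := one_div_le_one_div_of_le hpos hmono
  have hS : 1 + ∑ j ∈ Finset.Icc 1 k, 1 / lam j ≤ k * (1 / lam k) := by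
    rwa [witsenhausenMean, one_div_mul_eq_div, div_le_iff₀' hk0] at h
  rw [witsenhausenMean, one_div_mul_eq_div, div_le_iff₀' (by positivity),
    Finset.sum_Icc_succ_top (by omega), Nat.cast_succ]
  nlinarith

/-- **Existence and uniqueness of the Witsenhausen index.**
Given `q ≥ 1` and reals `λ_1 ≥ λ_2 ≥ ... ≥ λ_q > 0`, there is a unique integer `r`
with `1 ≤ r ≤ q` such that `1/λ_k < (1/k)(1 + ∑_{j=1}^k 1/λ_j)` for all `1 ≤ k ≤ r`,
and `1/λ_k ≥ (1/k)(1 + ∑_{j=1}^k 1/λ_j)` for all `r < k ≤ q`. -/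
theorem witsenhausen_index_exists_unique
    (q : ℕ) (hq : 1 ≤ q) (lam : ℕ → ℝ)
    (hpos : ∀ k, 1 ≤ k → k ≤ q → 0 < lam k)
    (hmono : ∀ k, 1 ≤ k → k + 1 ≤ q → lam (k + 1) ≤ lam k) :
    ∃! r : ℕ, (1 ≤ r ∧ r ≤ q) ∧
      (∀ k, 1 ≤ k → k ≤ r →
        1 / lam k < (1 / (k : ℝ)) * (1 + ∑ j ∈ Finset.Icc 1 k, 1 / lam j)) ∧
      (∀ k, r < k → k ≤ q →
        (1 / (k : ℝ)) * (1 + ∑ j ∈ Finset.Icc 1 k, 1 / lam j) ≤ 1 / lam k) := by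
  have hsucc : ∀ k, 1 ≤ k → k + 1 ≤ q →
      1 / lam (k + 1) < witsenhausenMean lam (k + 1) → 1 / lam k < witsenhausenMean lam k := by
    intro k hk hkq
    contrapose!
    exact witsenhausenMean_succ_le hk (hpos (k + 1) (by omega) hkq) (hmono k hk hkq)
  simpa only [not_lt, witsenhausenMean] using existsUnique_initialSegment_of_succ_imp
    (fun k => 1 / lam k < witsenhausenMean lam k) q hq (inv_lt_witsenhausenMean_one lam) hsucc
end

section
/- Let q ≥ 1, let λ_1 ≥ λ_2 ≥ ... ≥ λ_q > 0 be real numbers, and let r be the Witsenhausen index of (λ_1,...,λ_q). Define M_k := ((1/k)(1 + Σ_{j=1}^k 1/λ_j))^k · Π_{i=1}^k λ_i for k = 1,...,q. Then the sequence M_1, M_2, ..., M_r is strictly increasing, i.e., M_k < M_{k+1} for all 1 ≤ k ≤ r−1. -/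
/-!
Put `a := (1 + ∑_{j ≤ k} 1/λ_j) / k`, `b := 1/λ_{k+1}` and `P := ∏_{i ≤ k+1} λ_i`. Then
`M_k = a^k b · P` and `M_{k+1} = ((k a + b)/(k+1))^{k+1} · P`, so `M_k < M_{k+1}` is strict
weighted AM–GM for `a ≠ b`. The Witsenhausen condition at `k + 1 ≤ r` reads exactly `b < a`.
-/

theorem pow_mul_lt_weighted_mean_pow {k : ℕ} (hk : k ≠ 0) {a b : ℝ} (ha : 0 ≤ a) (hb : 0 ≤ b)
    (hab : a ≠ b) : a ^ k * b < ((k * a + b) / (k + 1)) ^ (k + 1) := by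
  have hgm : a ^ ((k : ℝ) / (k + 1)) * b ^ (1 / ((k : ℝ) + 1)) < (k * a + b) / (k + 1) := by
    have := (Real.geom_mean_lt_arith_mean2_weighted_iff_of_pos (w₁ := k / (k + 1))
      (w₂ := 1 / (k + 1)) (by positivity) (by positivity) ha hb (by field_simp)).2 hab
    convert this using 1
    field_simp
  have hpow : (a ^ ((k : ℝ) / (k + 1)) * b ^ (1 / ((k : ℝ) + 1))) ^ (k + 1) = a ^ k * b := by
    rw [mul_pow, ← Real.rpow_natCast, ← Real.rpow_natCast (b ^ _), ← Real.rpow_mul ha,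
      ← Real.rpow_mul hb]
    push_cast
    field_simp
    simp
  calc a ^ k * b = (a ^ ((k : ℝ) / (k + 1)) * b ^ (1 / ((k : ℝ) + 1))) ^ (k + 1) := hpow.symm
    _ < ((k * a + b) / (k + 1)) ^ (k + 1) := by gcongr

theorem mean_pow_mul_lt_succ_of_inv_lt {k : ℕ} (hk : k ≠ 0) {S P l : ℝ} (hP : 0 < P)
    (hl : 0 < l) (h : 1 / l < 1 / ((k : ℝ) + 1) * (S + 1 / l)) :
    (1 / (k : ℝ) * S) ^ k * P < (1 / ((k : ℝ) + 1) * (S + 1 / l)) ^ (k + 1) * (P * l) := by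
  have hk0 : (0 : ℝ) < k := by positivity
  have hS : k * (1 / (k : ℝ) * S) = S := by field_simp
  have hb : 0 < 1 / l := by positivity
  have hba : 1 / l < 1 / (k : ℝ) * S := by
    rw [one_div_mul_eq_div, lt_div_iff₀ hk0]
    rw [one_div_mul_eq_div, lt_div_iff₀ (by positivity)] at h
    linarith
  calc (1 / (k : ℝ) * S) ^ k * P = (1 / (k : ℝ) * S) ^ k * (1 / l) * (P * l) := by field_simp
    _ < ((k * (1 / (k : ℝ) * S) + 1 / l) / (k + 1)) ^ (k + 1) * (P * l) := by
      gcongr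
      exact pow_mul_lt_weighted_mean_pow hk (hb.trans hba).le hb.le hba.ne'
    _ = (1 / ((k : ℝ) + 1) * (S + 1 / l)) ^ (k + 1) * (P * l) := by rw [hS]; ring

theorem M_strictly_increasing_general
    (q : ℕ) (lam : ℕ → ℝ)
    (hpos : ∀ k, 1 ≤ k → k ≤ q → 0 < lam k)
    (r : ℕ) (hrq : r ≤ q)
    (hup : ∀ k, 1 ≤ k → k ≤ r →
      1 / lam k < (1 / (k : ℝ)) * (1 + ∑ j ∈ Finset.Icc 1 k, 1 / lam j))
    (M : ℕ → ℝ)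
    (hM : ∀ k, M k =
      ((1 / (k : ℝ)) * (1 + ∑ j ∈ Finset.Icc 1 k, 1 / lam j)) ^ k *
        ∏ i ∈ Finset.Icc 1 k, lam i) :
    ∀ k, 1 ≤ k → k + 1 ≤ r → M k < M (k + 1) := by
  intro k hk hkr
  have hprod : 0 < ∏ i ∈ Finset.Icc 1 k, lam i :=
    Finset.prod_pos fun i hi ↦ by
      obtain ⟨h1, h2⟩ := Finset.mem_Icc.1 hi
      exact hpos i h1 (by omega)
  have hup_succ := hup (k + 1) (by omega) hkr
  rw [Finset.sum_Icc_succ_top (by omega), ← add_assoc] at hup_succ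
  rw [hM, hM, Finset.sum_Icc_succ_top (by omega), Finset.prod_Icc_succ_top (by omega),
    ← add_assoc]
  push_cast at hup_succ ⊢
  exact mean_pow_mul_lt_succ_of_inv_lt (by omega) hprod (hpos (k + 1) (by omega) (by omega))
    hup_succ

/-- Given `λ_1 ≥ ... ≥ λ_q > 0` with Witsenhausen index `r`, the sequence
`M_k := ((1/k)(1 + ∑_{j=1}^k 1/λ_j))^k · ∏_{i=1}^k λ_i` is strictly increasing
for `k = 1, ..., r`, i.e. `M_k < M_{k+1}` for all `1 ≤ k ≤ r - 1`. -/
theorem M_strictly_increasing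
    (q : ℕ) (hq : 1 ≤ q) (lam : ℕ → ℝ)
    (hpos : ∀ k, 1 ≤ k → k ≤ q → 0 < lam k)
    (hmono : ∀ k, 1 ≤ k → k + 1 ≤ q → lam (k + 1) ≤ lam k)
    (r : ℕ) (hr1 : 1 ≤ r) (hrq : r ≤ q)
    (hup : ∀ k, 1 ≤ k → k ≤ r →
      1 / lam k < (1 / (k : ℝ)) * (1 + ∑ j ∈ Finset.Icc 1 k, 1 / lam j))
    (hdown : ∀ k, r < k → k ≤ q →
      (1 / (k : ℝ)) * (1 + ∑ j ∈ Finset.Icc 1 k, 1 / lam j) ≤ 1 / lam k)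
    (M : ℕ → ℝ)
    (hM : ∀ k, M k =
      ((1 / (k : ℝ)) * (1 + ∑ j ∈ Finset.Icc 1 k, 1 / lam j)) ^ k *
        ∏ i ∈ Finset.Icc 1 k, lam i) :
    ∀ k, 1 ≤ k → k + 1 ≤ r → M k < M (k + 1) :=
  M_strictly_increasing_general q lam hpos r hrq hup M hM
end

section
/- Let q ≥ 1, let Λ_1 ≥ Λ_2 ≥ ... ≥ Λ_q > 0 be real numbers, let r be the Witsenhausen index of (Λ_1,...,Λ_q), and let μ := (1/r)(1 + Σ_{j=1}^r 1/Λ_j) be the water level. Then 1/Λ_k < μ for every k with 1 ≤ k ≤ r, and 1/Λ_k ≥ μ for every k with r < k ≤ q. Consequently, the water-filling powers p_i := max(μ − 1/Λ_i, 0) satisfy p_1 ≥ p_2 ≥ ... ≥ p_r > 0 and p_{r+1} = ... = p_q = 0. -/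
/-!
Since `Λ` is antitone and positive, `k ↦ 1/Λ k` is monotone on `[1, q]`, so the first claim
only needs the defining inequality at `k = r`, and the second one at `k = r + 1`. The latter
says that the mean stays at most `1/Λ (r+1)` after absorbing that term, so it was at most
`1/Λ (r+1)` before.
The claims about `p` follow because `x ↦ max (μ - x) 0` is antitone.
-/

open Finset

noncomputable def waterLevel (Λ : ℕ → ℝ) (k : ℕ) : ℝ :=
  1 / (k : ℝ) * (1 + ∑ j ∈ Icc 1 k, 1 / Λ j)

lemma waterLevel_le_of_waterLevel_succ_le {Λ : ℕ → ℝ} {k : ℕ} (hk : 0 < k)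
    (h : waterLevel Λ (k + 1) ≤ 1 / Λ (k + 1)) : waterLevel Λ k ≤ 1 / Λ (k + 1) := by
  unfold waterLevel at h ⊢
  rw [sum_Icc_succ_top (by omega), Nat.cast_succ] at h
  have hk' : (0 : ℝ) < k := by exact_mod_cast hk
  rw [one_div_mul_eq_div, div_le_iff₀ (by positivity)] at h
  rw [one_div_mul_eq_div, div_le_iff₀ hk']
  linarith

lemma monotoneOn_one_div_of_antitone {Λ : ℕ → ℝ} {q : ℕ}
    (hpos : ∀ k, 1 ≤ k → k ≤ q → 0 < Λ k)
    (hmono : ∀ k, 1 ≤ k → k + 1 ≤ q → Λ (k + 1) ≤ Λ k) :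
    MonotoneOn (fun k => 1 / Λ k) (Set.Icc 1 q) := by
  have hanti : AntitoneOn Λ (Set.Icc 1 q) :=
    antitoneOn_of_succ_le Set.ordConnected_Icc fun a _ ha hsa => by
      rw [Order.succ_eq_add_one] at hsa ⊢
      exact hmono a ha.1 hsa.2
  intro a ha b hb hab
  exact one_div_le_one_div_of_le (hpos b hb.1 hb.2) (hanti ha hb hab)

theorem water_level_properties_general
    (q : ℕ) (Λ : ℕ → ℝ)
    (hpos : ∀ k, 1 ≤ k → k ≤ q → 0 < Λ k)
    (hmono : ∀ k, 1 ≤ k → k + 1 ≤ q → Λ (k + 1) ≤ Λ k)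
    (r : ℕ) (hr1 : 1 ≤ r) (hrq : r ≤ q)
    (hup : ∀ k, 1 ≤ k → k ≤ r →
      1 / Λ k < (1 / (k : ℝ)) * (1 + ∑ j ∈ Finset.Icc 1 k, 1 / Λ j))
    (hdown : ∀ k, r < k → k ≤ q →
      (1 / (k : ℝ)) * (1 + ∑ j ∈ Finset.Icc 1 k, 1 / Λ j) ≤ 1 / Λ k)
    (μ : ℝ) (hμ : μ = (1 / (r : ℝ)) * (1 + ∑ j ∈ Finset.Icc 1 r, 1 / Λ j))
    (p : ℕ → ℝ) (hp : ∀ i, p i = max (μ - 1 / Λ i) 0) :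
    (∀ k, 1 ≤ k → k ≤ r → 1 / Λ k < μ) ∧
    (∀ k, r < k → k ≤ q → μ ≤ 1 / Λ k) ∧
    (∀ i, 1 ≤ i → i + 1 ≤ r → p (i + 1) ≤ p i) ∧
    (∀ i, 1 ≤ i → i ≤ r → 0 < p i) ∧
    (∀ i, r < i → i ≤ q → p i = 0) := by
  have hinv := monotoneOn_one_div_of_antitone hpos hmono
  replace hμ : μ = waterLevel Λ r := hμ
  have below : ∀ k, 1 ≤ k → k ≤ r → 1 / Λ k < μ := fun k hk hkr =>
    (hinv ⟨hk, hkr.trans hrq⟩ ⟨hr1, hrq⟩ hkr).trans_lt (hμ ▸ hup r hr1 le_rfl)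
  have above : ∀ k, r < k → k ≤ q → μ ≤ 1 / Λ k := fun k hrk hkq => by
    rw [hμ]
    exact (waterLevel_le_of_waterLevel_succ_le hr1 (hdown (r + 1) (by omega) (by omega))).trans
      (hinv ⟨by omega, by omega⟩ ⟨by omega, hkq⟩ hrk)
  refine ⟨below, above, fun i hi hir => ?_, fun i hi hir => ?_, fun i hri hiq => ?_⟩
  · rw [hp, hp]
    have := hinv ⟨hi, by omega⟩ ⟨by omega, by omega⟩ (Nat.le_succ i)
    exact max_le_max (by linarith) le_rfl
  · rw [hp]
    exact lt_max_of_lt_left (sub_pos.mpr (below i hi hir))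
  · rw [hp]
    exact max_eq_right (sub_nonpos.mpr (above i hri hiq))

/-- Given `Λ_1 ≥ ... ≥ Λ_q > 0` with Witsenhausen index `r` and water level
`μ := (1/r)(1 + ∑_{j=1}^r 1/Λ_j)`, we have `1/Λ_k < μ` for `1 ≤ k ≤ r` and
`1/Λ_k ≥ μ` for `r < k ≤ q`; consequently the water-filling powers
`p_i := max(μ - 1/Λ_i, 0)` satisfy `p_1 ≥ ... ≥ p_r > 0` and `p_{r+1} = ... = p_q = 0`. -/
theorem water_level_properties
    (q : ℕ) (hq : 1 ≤ q) (Λ : ℕ → ℝ)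
    (hpos : ∀ k, 1 ≤ k → k ≤ q → 0 < Λ k)
    (hmono : ∀ k, 1 ≤ k → k + 1 ≤ q → Λ (k + 1) ≤ Λ k)
    (r : ℕ) (hr1 : 1 ≤ r) (hrq : r ≤ q)
    (hup : ∀ k, 1 ≤ k → k ≤ r →
      1 / Λ k < (1 / (k : ℝ)) * (1 + ∑ j ∈ Finset.Icc 1 k, 1 / Λ j))
    (hdown : ∀ k, r < k → k ≤ q →
      (1 / (k : ℝ)) * (1 + ∑ j ∈ Finset.Icc 1 k, 1 / Λ j) ≤ 1 / Λ k)
    (μ : ℝ) (hμ : μ = (1 / (r : ℝ)) * (1 + ∑ j ∈ Finset.Icc 1 r, 1 / Λ j))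
    (p : ℕ → ℝ) (hp : ∀ i, p i = max (μ - 1 / Λ i) 0) :
    (∀ k, 1 ≤ k → k ≤ r → 1 / Λ k < μ) ∧
    (∀ k, r < k → k ≤ q → μ ≤ 1 / Λ k) ∧
    (∀ i, 1 ≤ i → i + 1 ≤ r → p (i + 1) ≤ p i) ∧
    (∀ i, 1 ≤ i → i ≤ r → 0 < p i) ∧
    (∀ i, r < i → i ≤ q → p i = 0) :=
  water_level_properties_general q Λ hpos hmono r hr1 hrq hup hdown μ hμ p hp
end

section
/- Let D be a real symmetric K×K matrix with an orthonormal basis of eigenvectors v_1,...,v_K ∈ ℝ^K satisfying D v_i = λ_i v_i, let σ > 0, let m ≥ 1, and let f : {1,...,m} → {1,...,K} be any function. For each i let m_i := #{k ∈ {1,...,m} : f(k) = i}. Then det(I_K + σ^{−2} (Σ_{k=1}^m v_{f(k)} v_{f(k)}ᵀ) D) = Π_{i=1}^K (1 + λ_i m_i / σ²). -/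
open Matrix

/-! Each rank-one term `v_{f k} v_{f k}ᵀ` fixes `v_j` when `f k = j` and kills it otherwise, so
`v_j` is an eigenvector of `I + σ⁻² (∑ₖ v_{f k} v_{f k}ᵀ) D` with eigenvalue `1 + λ_j m_j / σ²`.
As the orthonormal `v_j` form an invertible matrix, the determinant is the product of these
eigenvalues. -/

namespace Matrix

section CommSemiring

variable {R n ι κ : Type*} [CommSemiring R] [Fintype n] [Fintype κ] [DecidableEq ι]

theorem sum_vecMulVec_self_mulVec_of_orthonormal {v : ι → n → R}
    (hv : ∀ i j, v i ⬝ᵥ v j = if i = j then 1 else 0) (f : κ → ι) (j : ι) :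
    (∑ k, vecMulVec (v (f k)) (v (f k))) *ᵥ v j =
      (Finset.univ.filter fun k => f k = j).card • v j := by
  have hterm : ∀ k, vecMulVec (v (f k)) (v (f k)) *ᵥ v j = if f k = j then v j else 0 := by
    intro k
    rw [vecMulVec_mulVec, op_smul_eq_smul, hv]
    split_ifs with h
    · rw [h, one_smul]
    · exact zero_smul R _
  rw [sum_mulVec, Finset.sum_congr rfl fun k _ => hterm k, ← Finset.sum_filter,
    Finset.sum_const]

end CommSemiring

section CommRing

variable {R n : Type*} [CommRing R] [Fintype n] [DecidableEq n]

theorem isUnit_det_of_orthonormal {v : n → n → R}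
    (hv : ∀ i j, v i ⬝ᵥ v j = if i = j then 1 else 0) : IsUnit (of v).det :=
  isUnit_det_of_right_inverse (B := (of v)ᵀ) <| by
    ext i j
    simpa [mul_apply, dotProduct, one_apply] using hv i j

theorem det_eq_prod_of_mulVec_eq_smul {M : Matrix n n R} {v : n → n → R} {d : n → R}
    (hv : IsUnit (of v).det) (hMv : ∀ i, M *ᵥ v i = d i • v i) :
    M.det = ∏ i, d i := by
  have hMV : M * (of v)ᵀ = (of v)ᵀ * diagonal d := by
    ext a j
    rw [mul_diagonal]
    simpa [mul_apply, mulVec, dotProduct, mul_comm] using congrFun (hMv j) a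
  have hdet := congrArg det hMV
  rw [det_mul, det_mul, det_diagonal, det_transpose, mul_comm] at hdet
  exact hv.mul_left_cancel hdet

end CommRing

end Matrix

theorem eigenvector_compressors_det_general
    (K : ℕ) (D : Matrix (Fin K) (Fin K) ℝ)
    (v : Fin K → EuclideanSpace ℝ (Fin K)) (lam : Fin K → ℝ)
    (horth : ∀ i j, v i ⬝ᵥ v j = if i = j then (1 : ℝ) else 0)
    (heig : ∀ i, D *ᵥ v i = lam i • (v i : Fin K → ℝ))
    (σ : ℝ)
    (m : ℕ) (f : Fin m → Fin K)
    (mult : Fin K → ℕ)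
    (hmult : ∀ i, mult i = (Finset.univ.filter (fun k => f k = i)).card) :
    (1 + (σ ^ 2)⁻¹ • ((∑ k, vecMulVec (v (f k)) (v (f k))) * D)).det
      = ∏ i, (1 + lam i * (mult i : ℝ) / σ ^ 2) := by
  refine det_eq_prod_of_mulVec_eq_smul (isUnit_det_of_orthonormal horth) fun j => ?_
  rw [add_mulVec, one_mulVec, smul_mulVec, ← mulVec_mulVec, heig, mulVec_smul,
    sum_vecMulVec_self_mulVec_of_orthonormal horth, ← hmult, ← Nat.cast_smul_eq_nsmul ℝ]
  module

/-- **Determinant identity for eigenvector compressors.**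
If `D` is real symmetric with orthonormal eigenvectors `v_1, ..., v_K` (with
`D v_i = λ_i v_i`), `σ > 0`, and each of `m` compressors is some eigenvector
`v_{f(k)}`, then with `m_i` the multiplicity of `v_i` among the selections,
`det(I_K + σ⁻² (∑_k v_{f(k)} v_{f(k)}ᵀ) D) = ∏_i (1 + λ_i m_i / σ²)`. -/
theorem eigenvector_compressors_det
    (K : ℕ) (D : Matrix (Fin K) (Fin K) ℝ) (hsymm : D.IsSymm)
    (v : Fin K → EuclideanSpace ℝ (Fin K)) (lam : Fin K → ℝ)
    (horth : ∀ i j, v i ⬝ᵥ v j = if i = j then (1 : ℝ) else 0)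
    (heig : ∀ i, D *ᵥ v i = lam i • (v i : Fin K → ℝ))
    (σ : ℝ) (hσ : 0 < σ)
    (m : ℕ) (hm : 1 ≤ m) (f : Fin m → Fin K)
    (mult : Fin K → ℕ)
    (hmult : ∀ i, mult i = (Finset.univ.filter (fun k => f k = i)).card) :
    (1 + (σ ^ 2)⁻¹ • ((∑ k, vecMulVec (v (f k)) (v (f k))) * D)).det
      = ∏ i, (1 + lam i * (mult i : ℝ) / σ ^ 2) :=
  eigenvector_compressors_det_general K D v lam horth heig σ m f mult hmult
end

section
/- Let N ≥ 1, m ≥ 1, let Λ_1 ≥ Λ_2 ≥ ... ≥ Λ_N > 0 be real numbers, set q := min(m, N), let r be the Witsenhausen index of (Λ_1,...,Λ_q), and let μ := (1/r)(1 + Σ_{j=1}^r 1/Λ_j). Suppose (n_1,...,n_N) ∈ ℕ^N with Σ_{i=1}^N n_i = m maximizes Π_{i=1}^N (1 + Λ_i n_i/m) over all such integer allocations. Then for every k with n_k > 0, μ − 1/m < n_k/m + 1/Λ_k < μ + 1/m. Moreover, there exists a maximizing allocation with n_i = 0 for all i > r. -/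
/-!
Write `h_i = n_i/m + 1/Λ_i` for the height of channel `i`. Moving one block from a used
channel `i` to a channel `j` multiplies the value by a factor that is `≥ 1` exactly when
`h_j + 1/m ≤ h_i`; so at an optimum `h_i ≤ h_j + 1/m` whenever `n_i > 0`.

Since `∑_{j ≤ r} (μ - 1/Λ_j) = 1`, the first `r` channels can all reach height `μ` only by
using all `m` blocks; a used channel at height `≥ μ + 1/m` would force them all there, with a
block to spare. A used channel at height `≤ μ - 1/m` would force every used channel strictly
below `μ`, so the `s ≤ q` used channels would hold fewer than `∑_{i ≤ s} (μ - 1/Λ_i) · m ≤ m`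
blocks, the deficit `∑_{i ≤ s} (μ - 1/Λ_i)` being largest at `s = r`.

Hence channels `r < k ≤ q`, whose base `1/Λ_k` is already `≥ μ`, are never used. A block in a
channel beyond `q = m` leaves one of the first `m` channels empty; swapping the two channels
keeps the allocation optimal and moves the load into a channel `≤ r`.
-/

open Finset

namespace Finset

variable {ι : Type*} [DecidableEq ι] {s : Finset ι} {i j : ι}

@[to_additive]
theorem mul_mul_prod_sdiff_pair {M : Type*} [CommMonoid M] (hi : i ∈ s) (hj : j ∈ s) (hij : i ≠ j)
    (f : ι → M) : f i * f j * ∏ x ∈ s \ {i, j}, f x = ∏ x ∈ s, f x := by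
  rw [← prod_pair hij, mul_comm]
  exact prod_sdiff (by simp [insert_subset_iff, hi, hj])

theorem sum_eq_sum_of_eq_off_pair {M : Type*} [AddCommMonoid M] {f g : ι → M}
    (hi : i ∈ s) (hj : j ∈ s) (hij : i ≠ j) (hfg : ∀ x ∈ s, x ≠ i → x ≠ j → f x = g x)
    (hpair : f i + f j = g i + g j) : ∑ x ∈ s, f x = ∑ x ∈ s, g x := by
  rw [← add_add_sum_sdiff_pair hi hj hij, ← add_add_sum_sdiff_pair hi hj hij, hpair]
  congr 1
  refine sum_congr rfl fun x hx ↦ ?_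
  simp only [mem_sdiff, mem_insert, mem_singleton, not_or] at hx
  exact hfg x hx.1 hx.2.1 hx.2.2

theorem prod_le_prod_iff_of_eq_off_pair {R : Type*} [CommRing R] [LinearOrder R]
    [IsStrictOrderedRing R] {f g : ι → R} (hi : i ∈ s) (hj : j ∈ s) (hij : i ≠ j)
    (hfg : ∀ x ∈ s, x ≠ i → x ≠ j → f x = g x) (hg : ∀ x ∈ s, x ≠ i → x ≠ j → 0 < g x) :
    ∏ x ∈ s, f x ≤ ∏ x ∈ s, g x ↔ f i * f j ≤ g i * g j := by
  have hmem : ∀ x ∈ s \ {i, j}, x ∈ s ∧ x ≠ i ∧ x ≠ j := fun x hx ↦ by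
    simpa only [mem_sdiff, mem_insert, mem_singleton, not_or] using hx
  have hrest : ∏ x ∈ s \ {i, j}, f x = ∏ x ∈ s \ {i, j}, g x :=
    prod_congr rfl fun x hx ↦ hfg x (hmem x hx).1 (hmem x hx).2.1 (hmem x hx).2.2
  rw [← mul_mul_prod_sdiff_pair hi hj hij, ← mul_mul_prod_sdiff_pair hi hj hij, hrest]
  exact mul_le_mul_iff_of_pos_right <| prod_pos fun x hx ↦
    hg x (hmem x hx).1 (hmem x hx).2.1 (hmem x hx).2.2

theorem sum_Icc_card_le_sum_of_monotoneOn {M : Type*} [AddCommMonoid M] [PartialOrder M]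
    [IsOrderedAddMonoid M] {f : ℕ → M} {N : ℕ} (hf : MonotoneOn f (Set.Icc 1 N))
    {S : Finset ℕ} (hS : S ⊆ Icc 1 N) : ∑ i ∈ Icc 1 #S, f i ≤ ∑ i ∈ S, f i := by
  induction S using Finset.induction_on_max with
  | empty => simp
  | insert a T hlt ih =>
    have haT : a ∉ T := fun h ↦ (hlt a h).false
    obtain ⟨ha1, haN⟩ := mem_Icc.1 (hS (mem_insert_self a T))
    have hcard : #T + 1 ≤ a := by
      have hTa : T ⊆ Ico 1 a := fun x hx ↦
        mem_Ico.2 ⟨(mem_Icc.1 (hS (mem_insert_of_mem hx))).1, hlt x hx⟩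
      have := card_le_card hTa
      rw [Nat.card_Ico] at this
      omega
    rw [card_insert_of_notMem haT, sum_Icc_succ_top (by omega), sum_insert haT, add_comm (f a)]
    exact add_le_add (ih ((subset_insert a T).trans hS))
      (hf ⟨by omega, hcard.trans haN⟩ ⟨ha1, haN⟩ hcard)

end Finset

namespace BlockAllocation

theorem le_add_one_div_of_move_le {a b x y m : ℝ} (ha : 0 < a) (hb : 0 < b) (hm : 0 < m)
    (h : (1 + a * (x - 1) / m) * (1 + b * (y + 1) / m) ≤ (1 + a * x / m) * (1 + b * y / m)) :
    x / m + 1 / a ≤ y / m + 1 / b + 1 / m := by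
  have hgain : (1 + a * x / m) * (1 + b * y / m) - (1 + a * (x - 1) / m) * (1 + b * (y + 1) / m)
      = a * b / m * (y / m + 1 / b + 1 / m - (x / m + 1 / a)) := by
    field_simp
    ring
  have : 0 ≤ y / m + 1 / b + 1 / m - (x / m + 1 / a) :=
    (mul_nonneg_iff_of_pos_left (by positivity)).1 (hgain ▸ sub_nonneg.2 h)
  linarith

section

variable {ι : Type*} (s : Finset ι) (Λ : ι → ℝ) (m : ℕ)

noncomputable def value (n : ι → ℕ) : ℝ := ∏ i ∈ s, (1 + Λ i * n i / m)

def IsOptimal (n : ι → ℕ) : Prop :=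
  ∑ i ∈ s, n i = m ∧ ∀ n' : ι → ℕ, ∑ i ∈ s, n' i = m → value s Λ m n' ≤ value s Λ m n

noncomputable def height (n : ι → ℕ) (i : ι) : ℝ := n i / m + 1 / Λ i

variable {s Λ m} [DecidableEq ι] {n n' : ι → ℕ} {i j : ι}

theorem value_le_value_iff_of_eq_off_pair (hΛ : ∀ x ∈ s, 0 ≤ Λ x) (hi : i ∈ s) (hj : j ∈ s)
    (hij : i ≠ j) (hnn' : ∀ x ∈ s, x ≠ i → x ≠ j → n x = n' x) :
    value s Λ m n ≤ value s Λ m n' ↔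
      (1 + Λ i * n i / m) * (1 + Λ j * n j / m) ≤ (1 + Λ i * n' i / m) * (1 + Λ j * n' j / m) :=
  prod_le_prod_iff_of_eq_off_pair hi hj hij (fun x hx hxi hxj ↦ by rw [hnn' x hx hxi hxj])
    fun x hx _ _ ↦ by have := hΛ x hx; positivity

theorem IsOptimal.height_le_height_add (hn : IsOptimal s Λ m n) (hΛ : ∀ x ∈ s, 0 < Λ x)
    (hm : 0 < m) (hi : i ∈ s) (hj : j ∈ s) (hij : i ≠ j) (hni : 0 < n i) :
    height Λ m n i ≤ height Λ m n j + 1 / m := by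
  set w := Function.update (Function.update n i (n i - 1)) j (n j + 1)
  have hwi : w i = n i - 1 := by simp [w, hij]
  have hwj : w j = n j + 1 := by simp [w]
  have hw : ∀ x ∈ s, x ≠ i → x ≠ j → w x = n x := fun x _ hxi hxj ↦ by simp [w, hxi, hxj]
  have hw_sum : ∑ x ∈ s, w x = m := by
    rw [← hn.1]
    exact sum_eq_sum_of_eq_off_pair hi hj hij hw (by omega)
  have hmove := (value_le_value_iff_of_eq_off_pair (fun x hx ↦ (hΛ x hx).le) hi hj hij hw).1
    (hn.2 w hw_sum)
  rw [hwi, hwj, Nat.cast_sub hni, Nat.cast_add, Nat.cast_one] at hmove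
  exact le_add_one_div_of_move_le (hΛ i hi) (hΛ j hj) (by exact_mod_cast hm) hmove

theorem IsOptimal.comp_swap (hn : IsOptimal s Λ m n) (hΛ : ∀ x ∈ s, 0 ≤ Λ x) (hi : i ∈ s)
    (hj : j ∈ s) (hij : i ≠ j) (hni : n i = 0) (hΛij : Λ j ≤ Λ i) :
    IsOptimal s Λ m (n ∘ Equiv.swap i j) := by
  have hoff : ∀ x ∈ s, x ≠ i → x ≠ j → n x = (n ∘ Equiv.swap i j) x := fun x _ hxi hxj ↦ by
    simp [Equiv.swap_apply_of_ne_of_ne hxi hxj]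
  refine ⟨?_, fun n' hn' ↦ (hn.2 n' hn').trans ?_⟩
  · rw [← hn.1]
    exact (sum_eq_sum_of_eq_off_pair hi hj hij hoff (by simp [add_comm])).symm
  · rw [value_le_value_iff_of_eq_off_pair hΛ hi hj hij hoff]
    simp only [Function.comp_apply, Equiv.swap_apply_left, Equiv.swap_apply_right, hni]
    have : Λ j * n j / m ≤ Λ i * n j / m := by gcongr
    simpa using this

end

noncomputable def waterLevel (Λ : ℕ → ℝ) (k : ℕ) : ℝ :=
  (1 / (k : ℝ)) * (1 + ∑ j ∈ Finset.Icc 1 k, 1 / Λ j)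

structure IsWitsenhausenIndex (Λ : ℕ → ℝ) (q r : ℕ) : Prop where
  one_le : 1 ≤ r
  le : r ≤ q
  one_div_lt : ∀ k, 1 ≤ k → k ≤ r → 1 / Λ k < waterLevel Λ k
  waterLevel_le : ∀ k, r < k → k ≤ q → waterLevel Λ k ≤ 1 / Λ k

variable {Λ : ℕ → ℝ} {N m q r : ℕ} {n : ℕ → ℕ}

theorem sum_Icc_one_div_eq (hr : 0 < r) :
    ∑ j ∈ Icc 1 r, 1 / Λ j = r * waterLevel Λ r - 1 := by
  have : (r : ℝ) ≠ 0 := by positivity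
  simp only [waterLevel]
  field_simp
  ring

theorem waterLevel_le_waterLevel_succ {k : ℕ} (hk : 0 < k)
    (h : waterLevel Λ (k + 1) ≤ 1 / Λ (k + 1)) : waterLevel Λ k ≤ waterLevel Λ (k + 1) := by
  have hk' : (0 : ℝ) < k := by exact_mod_cast hk
  have hsucc := sum_Icc_one_div_eq (Λ := Λ) (Nat.succ_pos k)
  rw [sum_Icc_succ_top (by omega), sum_Icc_one_div_eq hk] at hsucc
  push_cast at hsucc
  refine le_of_mul_le_mul_left ?_ hk'
  linarith

namespace IsWitsenhausenIndex

variable (hW : IsWitsenhausenIndex Λ q r)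
include hW

theorem waterLevel_le_waterLevel {k : ℕ} (hrk : r ≤ k) (hkq : k ≤ q) :
    waterLevel Λ r ≤ waterLevel Λ k := by
  induction k, hrk using Nat.le_induction with
  | base => rfl
  | succ k hrk ih =>
    exact (ih (by omega)).trans <| waterLevel_le_waterLevel_succ (by have := hW.one_le; omega)
      (hW.waterLevel_le _ (by omega) hkq)

theorem waterLevel_le_one_div {k : ℕ} (hrk : r < k) (hkq : k ≤ q) :
    waterLevel Λ r ≤ 1 / Λ k :=
  (hW.waterLevel_le_waterLevel hrk.le hkq).trans (hW.waterLevel_le k hrk hkq)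

theorem one_div_le_waterLevel (hpos : ∀ i ∈ Icc 1 N, 0 < Λ i) (hanti : AntitoneOn Λ (Set.Icc 1 N))
    (hrN : r ≤ N) {j : ℕ} (hj : j ∈ Icc 1 r) : 1 / Λ j ≤ waterLevel Λ r := by
  obtain ⟨hj1, hjr⟩ := mem_Icc.1 hj
  refine le_of_lt (lt_of_le_of_lt ?_ (hW.one_div_lt r hW.one_le le_rfl))
  exact one_div_le_one_div_of_le (hpos r (mem_Icc.2 ⟨hW.one_le, hrN⟩))
    (hanti ⟨hj1, hjr.trans hrN⟩ ⟨hW.one_le, hrN⟩ hjr)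

theorem sum_Icc_waterLevel_sub_le_one (hpos : ∀ i ∈ Icc 1 N, 0 < Λ i)
    (hanti : AntitoneOn Λ (Set.Icc 1 N)) (hqN : q ≤ N) {s : ℕ} (hsq : s ≤ q) :
    ∑ i ∈ Icc 1 s, (waterLevel Λ r - 1 / Λ i) ≤ 1 := by
  have hr := hW.one_le
  have hrN : r ≤ N := hW.le.trans hqN
  have hprefix : ∑ i ∈ Icc 1 r, (waterLevel Λ r - 1 / Λ i) = 1 := by
    rw [sum_sub_distrib, sum_const, Nat.card_Icc, nsmul_eq_mul, sum_Icc_one_div_eq hr,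
      Nat.add_sub_cancel]
    ring
  refine le_of_le_of_eq ?_ hprefix
  rcases le_or_gt s r with hsr | hrs
  · exact sum_le_sum_of_subset_of_nonneg (Icc_subset_Icc_right hsr) fun i hi _ ↦
      sub_nonneg.2 (hW.one_div_le_waterLevel hpos hanti hrN hi)
  · have hsplit := sum_Ioc_consecutive (fun i ↦ waterLevel Λ r - 1 / Λ i) r.zero_le hrs.le
    simp only [← Icc_add_one_left_eq_Ioc, zero_add] at hsplit
    have htail : ∑ i ∈ Icc (r + 1) s, (waterLevel Λ r - 1 / Λ i) ≤ 0 := sum_nonpos fun i hi ↦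
      sub_nonpos.2 (hW.waterLevel_le_one_div (mem_Icc.1 hi).1 ((mem_Icc.1 hi).2.trans hsq))
    linarith

end IsWitsenhausenIndex

theorem IsOptimal.height_lt_waterLevel_add (hn : IsOptimal (Icc 1 N) Λ m n)
    (hpos : ∀ i ∈ Icc 1 N, 0 < Λ i) (hm : 0 < m) (hr : 0 < r) (hrN : r ≤ N) {k : ℕ}
    (hk : k ∈ Icc 1 N) (hnk : 0 < n k) : height Λ m n k < waterLevel Λ r + 1 / m := by
  by_contra! hhigh
  have hm' : (0 : ℝ) < 1 / m := by positivity
  have hhead : ∀ j ∈ Icc 1 r, waterLevel Λ r ≤ height Λ m n j := fun j hj ↦ by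
    rcases eq_or_ne k j with rfl | hkj
    · linarith
    · linarith [hn.height_le_height_add hpos hm hk (Icc_subset_Icc_right hrN hj) hkj hnk]
  have hexcess : ∑ j ∈ Icc 1 r, (height Λ m n j - waterLevel Λ r)
      = (∑ j ∈ Icc 1 r, (n j : ℝ)) / m - 1 := by
    simp only [height, sum_sub_distrib, sum_add_distrib, sum_div, sum_Icc_one_div_eq hr,
      sum_const, Nat.card_Icc, Nat.add_sub_cancel, nsmul_eq_mul]
    ring
  have hload : ∑ j ∈ Icc 1 r, n j ≤ m := hn.1 ▸ sum_le_sum_of_subset (Icc_subset_Icc_right hrN)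
  rcases le_or_gt k r with hkr | hrk
  · have : 0 < ∑ j ∈ Icc 1 r, (height Λ m n j - waterLevel Λ r) :=
      sum_pos' (fun j hj ↦ sub_nonneg.2 (hhead j hj)) ⟨k, mem_Icc.2 ⟨(mem_Icc.1 hk).1, hkr⟩,
        by linarith⟩
    have : (∑ j ∈ Icc 1 r, (n j : ℝ)) / m ≤ 1 :=
      div_le_one_of_le₀ (by exact_mod_cast hload) (Nat.cast_nonneg m)
    linarith
  · have hload' : ∑ j ∈ Icc 1 r, n j < m := by
      have : ∑ j ∈ insert k (Icc 1 r), n j ≤ m :=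
        hn.1 ▸ sum_le_sum_of_subset (insert_subset hk (Icc_subset_Icc_right hrN))
      rw [sum_insert (by simp; omega)] at this
      omega
    have : 0 ≤ ∑ j ∈ Icc 1 r, (height Λ m n j - waterLevel Λ r) :=
      sum_nonneg fun j hj ↦ sub_nonneg.2 (hhead j hj)
    have : (∑ j ∈ Icc 1 r, (n j : ℝ)) / m < 1 :=
      (div_lt_one (by positivity)).2 (by exact_mod_cast hload')
    linarith

theorem IsOptimal.waterLevel_sub_lt_height (hn : IsOptimal (Icc 1 N) Λ m n)
    (hpos : ∀ i ∈ Icc 1 N, 0 < Λ i) (hanti : AntitoneOn Λ (Set.Icc 1 N)) (hm : 0 < m)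
    (hW : IsWitsenhausenIndex Λ (min m N) r) {k : ℕ} (hk : k ∈ Icc 1 N) (hnk : 0 < n k) :
    waterLevel Λ r - 1 / m < height Λ m n k := by
  by_contra! hlow
  set μ := waterLevel Λ r
  have hm' : (0 : ℝ) < 1 / m := by positivity
  set S : Finset ℕ := {i ∈ Icc 1 N | n i ≠ 0}
  have hSN : S ⊆ Icc 1 N := filter_subset _ _
  have hkS : k ∈ S := mem_filter.2 ⟨hk, hnk.ne'⟩
  have hload : ∑ i ∈ S, n i = m := by rw [sum_filter_ne_zero]; exact hn.1
  have hcard : #S ≤ min m N := by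
    refine le_min ?_ (by simpa using card_le_card hSN)
    have := card_nsmul_le_sum S n 1 fun i hi ↦ Nat.one_le_iff_ne_zero.2 (mem_filter.1 hi).2
    simpa [hload] using this
  have hfill : ∀ i ∈ S, height Λ m n i ≤ μ := fun i hi ↦ by
    obtain ⟨hi, hni⟩ := mem_filter.1 hi
    rcases eq_or_ne i k with rfl | hik
    · linarith
    · linarith [hn.height_le_height_add hpos hm hi hk hik (Nat.pos_of_ne_zero hni)]
  have hinv : MonotoneOn (fun i ↦ 1 / Λ i) (Set.Icc 1 N) := fun a ha b hb hab ↦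
    one_div_le_one_div_of_le (hpos b (mem_Icc.2 hb)) (hanti ha hb hab)
  unfold height at hfill hlow
  refine lt_irrefl (1 : ℝ) ?_
  calc (1 : ℝ) = ∑ i ∈ S, (n i : ℝ) / m := by
        rw [← sum_div, ← Nat.cast_sum, hload, div_self (by positivity)]
    _ < ∑ i ∈ S, (μ - 1 / Λ i) :=
        sum_lt_sum (fun i hi ↦ by linarith [hfill i hi]) ⟨k, hkS, by linarith⟩
    _ = #S * μ - ∑ i ∈ S, 1 / Λ i := by rw [sum_sub_distrib, sum_const, nsmul_eq_mul]
    _ ≤ #S * μ - ∑ i ∈ Icc 1 #S, 1 / Λ i :=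
        sub_le_sub_left (sum_Icc_card_le_sum_of_monotoneOn hinv hSN) _
    _ = ∑ i ∈ Icc 1 #S, (μ - 1 / Λ i) := by
        rw [sum_sub_distrib, sum_const, Nat.card_Icc, Nat.add_sub_cancel, nsmul_eq_mul]
    _ ≤ 1 := hW.sum_Icc_waterLevel_sub_le_one hpos hanti (min_le_right m N) hcard

theorem IsOptimal.eq_zero_of_lt_of_le (hn : IsOptimal (Icc 1 N) Λ m n)
    (hpos : ∀ i ∈ Icc 1 N, 0 < Λ i) (hm : 0 < m) (hW : IsWitsenhausenIndex Λ q r) (hqN : q ≤ N)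
    {k : ℕ} (hrk : r < k) (hkq : k ≤ q) : n k = 0 := by
  by_contra hnk
  have hhigh := hn.height_lt_waterLevel_add hpos hm hW.one_le (hW.le.trans hqN)
    (mem_Icc.2 ⟨by omega, hkq.trans hqN⟩) (Nat.pos_of_ne_zero hnk)
  have : (1 : ℝ) / m ≤ n k / m := by gcongr; exact_mod_cast Nat.one_le_iff_ne_zero.2 hnk
  have := hW.waterLevel_le_one_div hrk hkq
  unfold height at hhigh
  linarith

theorem IsOptimal.exists_isOptimal_eq_zero_of_lt (hn : IsOptimal (Icc 1 N) Λ m n)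
    (hpos : ∀ i ∈ Icc 1 N, 0 < Λ i) (hanti : AntitoneOn Λ (Set.Icc 1 N)) (hm : 0 < m)
    (hW : IsWitsenhausenIndex Λ (min m N) r) :
    ∃ n'', IsOptimal (Icc 1 N) Λ m n'' ∧ ∀ i, r < i → i ≤ N → n'' i = 0 := by
  induction h : ∑ i ∈ Ioc r N, n i using Nat.strong_induction_on generalizing n with
  | _ t ih =>
  by_cases htail : ∀ i ∈ Ioc r N, n i = 0
  · exact ⟨n, hn, fun i hri hiN ↦ htail i (mem_Ioc.2 ⟨hri, hiN⟩)⟩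
  push Not at htail
  obtain ⟨k, hk, hnk⟩ := htail
  obtain ⟨hrk, hkN⟩ := mem_Ioc.1 hk
  have hkN' : k ∈ Icc 1 N := mem_Icc.2 ⟨by omega, hkN⟩
  have hmk : m < k := by
    by_contra! hkm
    exact hnk (hn.eq_zero_of_lt_of_le hpos hm hW (min_le_right m N) hrk (le_min hkm hkN))
  obtain ⟨j, hj, hnj⟩ : ∃ j ∈ Icc 1 m, n j < 1 := by
    refine exists_lt_of_sum_lt ?_
    have : ∑ i ∈ insert k (Icc 1 m), n i ≤ ∑ i ∈ Icc 1 N, n i :=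
      sum_le_sum_of_subset (insert_subset hkN' (Icc_subset_Icc_right (by omega)))
    rw [hn.1, sum_insert (by simp; omega)] at this
    simp only [sum_const, Nat.card_Icc, smul_eq_mul, mul_one]
    omega
  obtain ⟨hj1, hjm⟩ := mem_Icc.1 hj
  have hjN : j ∈ Icc 1 N := mem_Icc.2 ⟨hj1, by omega⟩
  have hw := hn.comp_swap (fun x hx ↦ (hpos x hx).le) hjN hkN' (by omega) (by omega)
    (hanti (mem_Icc.1 hjN) (mem_Icc.1 hkN') (by omega))
  have hjr : j ≤ r := by
    by_contra! hrj
    apply hnk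
    simpa using hw.eq_zero_of_lt_of_le hpos hm hW (min_le_right m N) hrj (le_min hjm (by omega))
  refine ih _ ?_ hw rfl
  have hrest : ∀ x ∈ (Ioc r N).erase k, n (Equiv.swap j k x) = n x := fun x hx ↦ by
    obtain ⟨hxk, hx⟩ := mem_erase.1 hx
    rw [Equiv.swap_apply_of_ne_of_ne (by have := (mem_Ioc.1 hx).1; omega) hxk]
  rw [← h, ← add_sum_erase _ _ hk, ← add_sum_erase _ _ hk]
  simp only [Function.comp_apply, Equiv.swap_apply_right, sum_congr rfl hrest,
    Nat.lt_one_iff.1 hnj, zero_add]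
  exact Nat.lt_add_of_pos_left (Nat.pos_of_ne_zero hnk)

end BlockAllocation

open BlockAllocation

theorem optimal_allocation_heights_general
    (N m : ℕ) (Λ : ℕ → ℝ)
    (hpos : ∀ i, 1 ≤ i → i ≤ N → 0 < Λ i)
    (hmono : ∀ i, 1 ≤ i → i + 1 ≤ N → Λ (i + 1) ≤ Λ i)
    (q : ℕ) (hq : q = min m N)
    (r : ℕ) (hr1 : 1 ≤ r) (hrq : r ≤ q)
    (hup : ∀ k, 1 ≤ k → k ≤ r →
      1 / Λ k < (1 / (k : ℝ)) * (1 + ∑ j ∈ Finset.Icc 1 k, 1 / Λ j))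
    (hdown : ∀ k, r < k → k ≤ q →
      (1 / (k : ℝ)) * (1 + ∑ j ∈ Finset.Icc 1 k, 1 / Λ j) ≤ 1 / Λ k)
    (μ : ℝ) (hμ : μ = (1 / (r : ℝ)) * (1 + ∑ j ∈ Finset.Icc 1 r, 1 / Λ j))
    (n : ℕ → ℕ) (hsum : ∑ i ∈ Finset.Icc 1 N, n i = m)
    (hopt : ∀ n' : ℕ → ℕ, ∑ i ∈ Finset.Icc 1 N, n' i = m →
      ∏ i ∈ Finset.Icc 1 N, (1 + Λ i * (n' i : ℝ) / m)
        ≤ ∏ i ∈ Finset.Icc 1 N, (1 + Λ i * (n i : ℝ) / m)) :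
    (∀ k, 1 ≤ k → k ≤ N → 0 < n k →
      μ - 1 / (m : ℝ) < (n k : ℝ) / m + 1 / Λ k ∧
      (n k : ℝ) / m + 1 / Λ k < μ + 1 / (m : ℝ)) ∧
    (∃ n'' : ℕ → ℕ, (∑ i ∈ Finset.Icc 1 N, n'' i = m) ∧
      (∀ i, r < i → i ≤ N → n'' i = 0) ∧
      (∀ n' : ℕ → ℕ, ∑ i ∈ Finset.Icc 1 N, n' i = m →
        ∏ i ∈ Finset.Icc 1 N, (1 + Λ i * (n' i : ℝ) / m)
          ≤ ∏ i ∈ Finset.Icc 1 N, (1 + Λ i * (n'' i : ℝ) / m))) := by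
  subst hq hμ
  have hm : 0 < m := by omega
  have hpos' : ∀ i ∈ Icc 1 N, 0 < Λ i := fun i hi ↦ hpos i (mem_Icc.1 hi).1 (mem_Icc.1 hi).2
  have hanti : AntitoneOn Λ (Set.Icc 1 N) :=
    antitoneOn_of_succ_le Set.ordConnected_Icc fun i _ hi hi' ↦ hmono i hi.1 hi'.2
  have hW : IsWitsenhausenIndex Λ (min m N) r := ⟨hr1, hrq, hup, hdown⟩
  have hn : IsOptimal (Icc 1 N) Λ m n := ⟨hsum, hopt⟩
  refine ⟨fun k hk1 hkN hnk ↦ ?_, ?_⟩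
  · have hk : k ∈ Icc 1 N := mem_Icc.2 ⟨hk1, hkN⟩
    exact ⟨hn.waterLevel_sub_lt_height hpos' hanti hm hW hk hnk,
      hn.height_lt_waterLevel_add hpos' hm hr1 (by omega) hk hnk⟩
  · obtain ⟨n'', ⟨hsum'', hopt''⟩, htail⟩ := hn.exists_isOptimal_eq_zero_of_lt hpos' hanti hm hW
    exact ⟨n'', hsum'', htail, hopt''⟩

/-- **Necessary condition for an optimal block-filling allocation.**
If the integer allocation `(n_1, ..., n_N)` of `m` blocks maximizes
`∏_{i=1}^N (1 + Λ_i n_i/m)`, then every channel `k` with `n_k > 0` has final height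
`n_k/m + 1/Λ_k` within `(μ − 1/m, μ + 1/m)`, and there is a maximizing allocation
supported on the first `r` channels. -/
theorem optimal_allocation_heights
    (N m : ℕ) (hN : 1 ≤ N) (hm : 1 ≤ m) (Λ : ℕ → ℝ)
    (hpos : ∀ i, 1 ≤ i → i ≤ N → 0 < Λ i)
    (hmono : ∀ i, 1 ≤ i → i + 1 ≤ N → Λ (i + 1) ≤ Λ i)
    (q : ℕ) (hq : q = min m N)
    (r : ℕ) (hr1 : 1 ≤ r) (hrq : r ≤ q)
    (hup : ∀ k, 1 ≤ k → k ≤ r →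
      1 / Λ k < (1 / (k : ℝ)) * (1 + ∑ j ∈ Finset.Icc 1 k, 1 / Λ j))
    (hdown : ∀ k, r < k → k ≤ q →
      (1 / (k : ℝ)) * (1 + ∑ j ∈ Finset.Icc 1 k, 1 / Λ j) ≤ 1 / Λ k)
    (μ : ℝ) (hμ : μ = (1 / (r : ℝ)) * (1 + ∑ j ∈ Finset.Icc 1 r, 1 / Λ j))
    (n : ℕ → ℕ) (hsum : ∑ i ∈ Finset.Icc 1 N, n i = m)
    (hopt : ∀ n' : ℕ → ℕ, ∑ i ∈ Finset.Icc 1 N, n' i = m →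
      ∏ i ∈ Finset.Icc 1 N, (1 + Λ i * (n' i : ℝ) / m)
        ≤ ∏ i ∈ Finset.Icc 1 N, (1 + Λ i * (n i : ℝ) / m)) :
    (∀ k, 1 ≤ k → k ≤ N → 0 < n k →
      μ - 1 / (m : ℝ) < (n k : ℝ) / m + 1 / Λ k ∧
      (n k : ℝ) / m + 1 / Λ k < μ + 1 / (m : ℝ)) ∧
    (∃ n'' : ℕ → ℕ, (∑ i ∈ Finset.Icc 1 N, n'' i = m) ∧
      (∀ i, r < i → i ≤ N → n'' i = 0) ∧
      (∀ n' : ℕ → ℕ, ∑ i ∈ Finset.Icc 1 N, n' i = m →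
        ∏ i ∈ Finset.Icc 1 N, (1 + Λ i * (n' i : ℝ) / m)
          ≤ ∏ i ∈ Finset.Icc 1 N, (1 + Λ i * (n'' i : ℝ) / m))) :=
  optimal_allocation_heights_general N m Λ hpos hmono q hq r hr1 hrq hup hdown μ hμ n hsum hopt
end

section
/- Let N ≥ 1, m ≥ 1, let Λ_1 ≥ Λ_2 ≥ ... ≥ Λ_N > 0 be real numbers, set q := min(m, N), and let r be the Witsenhausen index of (Λ_1,...,Λ_q). Let S ⊆ {1,...,N} be a subset with {1,...,r} ⊆ S. Define the greedy allocation over S recursively: n^{(0)} = (0,...,0), and n^{(t+1)} is obtained from n^{(t)} by adding 1 to coordinate i_t, where i_t is the smallest index i ∈ S minimizing 1/Λ_i + n^{(t)}_i/m. Then Π_{i=1}^N (1 + Λ_i n^{(m)}_i/m) = max { Π_{i=1}^N (1 + Λ_i n_i/m) : n ∈ ℕ^N, Σ_i n_i = m, and n_i = 0 for all i ∉ S }; that is, the greedy allocation attains the maximum value over all integer allocations supported on S. -/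
open scoped Classical in
/-- The index (smallest, among those of lowest current height `1/Λ_i + n_i/m`)
in `S` to which the greedy block-filling policy adds the next block. -/
noncomputable def greedyStep (Λ : ℕ → ℝ) (m : ℕ) (S : Finset ℕ) (n : ℕ → ℕ) : ℕ :=
  let height : ℕ → ℝ := fun i => 1 / Λ i + (n i : ℝ) / m
  let T := S.filter fun i => ∀ j ∈ S, height i ≤ height j
  if h : T.Nonempty then T.min' h else 0

/-- The greedy block-filling allocation after `t` steps: start from the zero
allocation and at each step add one block to the channel in `S` of currently
lowest height, breaking ties by smallest index. -/
noncomputable def greedyAlloc (Λ : ℕ → ℝ) (m : ℕ) (S : Finset ℕ) : ℕ → ℕ → ℕ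
  | 0, _ => 0
  | t + 1, i =>
    greedyAlloc Λ m S t i + if i = greedyStep Λ m S (greedyAlloc Λ m S t) then 1 else 0

/-!
Adding a block to channel `i` at height `h_i = 1/Λ_i + n_i/m` multiplies the value
`∏ (1 + Λ_i n_i/m) = ∏ Λ_i h_i` by the marginal gain `1 + 1/(m h_i)`. The gain decreases as the
height grows, so the greedy rule adds each block where the marginal gain is largest, and the
marginal gains along a channel decrease. Hence, by induction on the number of blocks: an
allocation `n` of `t + 1` blocks exceeds the greedy one `g` of `t` blocks in some channel `k`;
removing a block from `k` leaves at most the value of `g`, and the block removed had gain at most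
the gain of `k` at `g`, which is at most the gain of the greedy choice.
-/

open Finset

namespace BlockFilling

variable {Λ : ℕ → ℝ} {m : ℕ} {S : Finset ℕ}

noncomputable def height (Λ : ℕ → ℝ) (m i c : ℕ) : ℝ := 1 / Λ i + (c : ℝ) / m

noncomputable def gain (Λ : ℕ → ℝ) (m i c : ℕ) : ℝ := 1 + (m : ℝ)⁻¹ / height Λ m i c

noncomputable def allocValue (Λ : ℕ → ℝ) (m : ℕ) (S : Finset ℕ) (n : ℕ → ℕ) : ℝ :=
  ∏ i ∈ S, (1 + Λ i * (n i : ℝ) / m)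

theorem height_pos {i : ℕ} (hΛ : 0 < Λ i) (c : ℕ) : 0 < height Λ m i c := by
  unfold height
  positivity

theorem height_mono (i : ℕ) : Monotone (height Λ m i) := fun a b hab => by
  unfold height
  gcongr

theorem gain_nonneg {i : ℕ} (hΛ : 0 < Λ i) (c : ℕ) : 0 ≤ gain Λ m i c := by
  have := height_pos (m := m) hΛ c
  unfold gain
  positivity

theorem gain_le_gain {i j a b : ℕ} (hpos : 0 < height Λ m j b)
    (hle : height Λ m j b ≤ height Λ m i a) : gain Λ m i a ≤ gain Λ m j b := by
  unfold gain
  gcongr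

theorem one_add_mul_div_eq {i : ℕ} (hΛ : Λ i ≠ 0) (c : ℕ) :
    1 + Λ i * (c : ℝ) / m = Λ i * height Λ m i c := by
  rw [height, mul_add, mul_one_div_cancel hΛ, mul_div_assoc]

theorem one_add_mul_div_succ {i : ℕ} (hΛ : 0 < Λ i) (c : ℕ) :
    1 + Λ i * ((c + 1 : ℕ) : ℝ) / m = (1 + Λ i * (c : ℝ) / m) * gain Λ m i c := by
  have hh := (height_pos (m := m) hΛ c).ne'
  have hsucc : height Λ m i (c + 1) = height Λ m i c + (m : ℝ)⁻¹ := by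
    simp only [height]
    push_cast
    ring
  rw [one_add_mul_div_eq hΛ.ne', one_add_mul_div_eq hΛ.ne', hsucc, gain]
  field_simp

theorem sum_add_single {k : ℕ} (hk : k ∈ S) (n : ℕ → ℕ) :
    ∑ i ∈ S, (n + Pi.single k 1 : ℕ → ℕ) i = ∑ i ∈ S, n i + 1 := by
  simp only [Pi.add_apply, sum_add_distrib, sum_pi_single', if_pos hk]

theorem sub_single_add_single {n : ℕ → ℕ} {k : ℕ} (hk : 1 ≤ n k) :
    n - Pi.single k 1 + Pi.single k 1 = n := by
  refine tsub_add_cancel_of_le fun i => ?_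
  rcases eq_or_ne i k with rfl | hik
  · simpa using hk
  · simp [Pi.single_eq_of_ne hik]

theorem allocValue_nonneg (hΛ : ∀ i ∈ S, 0 < Λ i) (n : ℕ → ℕ) : 0 ≤ allocValue Λ m S n :=
  prod_nonneg fun i hi => by have := hΛ i hi; positivity

theorem allocValue_add_single {k : ℕ} (hk : k ∈ S) (hΛ : 0 < Λ k) (n : ℕ → ℕ) :
    allocValue Λ m S (n + Pi.single k 1) = allocValue Λ m S n * gain Λ m k (n k) := by
  unfold allocValue
  rw [← mul_prod_erase S _ hk, ← mul_prod_erase S _ hk]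
  have hrest : ∏ i ∈ S.erase k, (1 + Λ i * ((n + Pi.single k 1 : ℕ → ℕ) i : ℝ) / m)
      = ∏ i ∈ S.erase k, (1 + Λ i * (n i : ℝ) / m) :=
    prod_congr rfl fun i hi => by simp [Pi.single_eq_of_ne (ne_of_mem_erase hi)]
  rw [hrest, Pi.add_apply, Pi.single_eq_same, one_add_mul_div_succ hΛ]
  ring

theorem greedyStep_mem_and_le (hS : S.Nonempty) (n : ℕ → ℕ) :
    greedyStep Λ m S n ∈ S ∧
      ∀ j ∈ S, height Λ m (greedyStep Λ m S n) (n (greedyStep Λ m S n)) ≤ height Λ m j (n j) := by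
  obtain ⟨i, hi, hmin⟩ := S.exists_min_image (fun i => height Λ m i (n i)) hS
  have hT : (S.filter fun i => ∀ j ∈ S, height Λ m i (n i) ≤ height Λ m j (n j)).Nonempty :=
    ⟨i, mem_filter.2 ⟨hi, hmin⟩⟩
  have hstep : greedyStep Λ m S n =
      (S.filter fun i => ∀ j ∈ S, height Λ m i (n i) ≤ height Λ m j (n j)).min' hT :=
    dif_pos hT
  rw [hstep]
  exact mem_filter.1 (min'_mem _ hT)

theorem greedyAlloc_succ (t : ℕ) :
    greedyAlloc Λ m S (t + 1) =
      greedyAlloc Λ m S t + Pi.single (greedyStep Λ m S (greedyAlloc Λ m S t)) 1 := by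
  funext i
  simp [greedyAlloc, Pi.single_apply]

theorem greedyAlloc_eq_zero (hS : S.Nonempty) {i : ℕ} (hi : i ∉ S) (t : ℕ) :
    greedyAlloc Λ m S t i = 0 := by
  induction t with
  | zero => rfl
  | succ t ih =>
    have hne : i ≠ greedyStep Λ m S (greedyAlloc Λ m S t) :=
      fun h => hi (h ▸ (greedyStep_mem_and_le hS _).1)
    rw [greedyAlloc_succ, Pi.add_apply, ih, Pi.single_eq_of_ne hne, add_zero]

theorem sum_greedyAlloc (hS : S.Nonempty) (t : ℕ) : ∑ i ∈ S, greedyAlloc Λ m S t i = t := by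
  induction t with
  | zero => simp [greedyAlloc]
  | succ t ih => rw [greedyAlloc_succ, sum_add_single (greedyStep_mem_and_le hS _).1, ih]

theorem allocValue_le_greedyAlloc (hS : S.Nonempty) (hΛ : ∀ i ∈ S, 0 < Λ i) (t : ℕ)
    (n : ℕ → ℕ) (hn : ∑ i ∈ S, n i = t) :
    allocValue Λ m S n ≤ allocValue Λ m S (greedyAlloc Λ m S t) := by
  induction t generalizing n with
  | zero =>
    refine le_of_eq (prod_congr rfl fun i hi => ?_)
    rw [sum_eq_zero_iff.1 hn i hi]
    rfl
  | succ t ih =>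
    set g := greedyAlloc Λ m S t
    obtain ⟨k, hk, hgk⟩ : ∃ k ∈ S, g k < n k :=
      exists_lt_of_sum_lt (by rw [hn, sum_greedyAlloc hS]; omega)
    set u := n - Pi.single k 1
    have hnu : n = u + Pi.single k 1 := (sub_single_add_single (by omega)).symm
    have hgu : g k ≤ u k := by
      simp only [Pi.sub_apply, Pi.single_eq_same, u]
      omega
    have hu : ∑ i ∈ S, u i = t := by
      have := sum_add_single hk u
      rw [← hnu, hn] at this
      omega
    obtain ⟨hs, hsmin⟩ := greedyStep_mem_and_le (m := m) hS g
    set s := greedyStep Λ m S g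
    have hg0 := allocValue_nonneg (m := m) hΛ g
    calc allocValue Λ m S n = allocValue Λ m S u * gain Λ m k (u k) := by
          rw [hnu, allocValue_add_single hk (hΛ k hk)]
      _ ≤ allocValue Λ m S g * gain Λ m k (u k) :=
          mul_le_mul_of_nonneg_right (ih u hu) (gain_nonneg (hΛ k hk) _)
      _ ≤ allocValue Λ m S g * gain Λ m k (g k) :=
          mul_le_mul_of_nonneg_left
            (gain_le_gain (height_pos (hΛ k hk) _) (height_mono k hgu)) hg0
      _ ≤ allocValue Λ m S g * gain Λ m s (g s) :=
          mul_le_mul_of_nonneg_left (gain_le_gain (height_pos (hΛ s hs) _) (hsmin k hk)) hg0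
      _ = allocValue Λ m S (greedyAlloc Λ m S (t + 1)) := by
          rw [greedyAlloc_succ, allocValue_add_single hs (hΛ s hs)]

theorem prod_eq_allocValue_of_subset {T : Finset ℕ} (hST : S ⊆ T) {n : ℕ → ℕ}
    (hn : ∀ i, i ∉ S → n i = 0) :
    ∏ i ∈ T, (1 + Λ i * (n i : ℝ) / m) = allocValue Λ m S n :=
  (prod_subset hST fun i _ hi => by simp [hn i hi]).symm

end BlockFilling

open BlockFilling

theorem greedy_optimal_on_subset_general
    (N m : ℕ) (Λ : ℕ → ℝ)
    (hpos : ∀ i, 1 ≤ i → i ≤ N → 0 < Λ i)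
    (r : ℕ) (hr1 : 1 ≤ r)
    (S : Finset ℕ) (hSN : S ⊆ Finset.Icc 1 N) (hrS : Finset.Icc 1 r ⊆ S)
    (g : ℕ → ℕ) (hg : g = greedyAlloc Λ m S m) :
    (∑ i ∈ Finset.Icc 1 N, g i = m) ∧ (∀ i, i ∉ S → g i = 0) ∧
    (∀ n : ℕ → ℕ, (∑ i ∈ Finset.Icc 1 N, n i = m) → (∀ i, i ∉ S → n i = 0) →
      ∏ i ∈ Finset.Icc 1 N, (1 + Λ i * (n i : ℝ) / m)
        ≤ ∏ i ∈ Finset.Icc 1 N, (1 + Λ i * (g i : ℝ) / m)) := by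
  have hS : S.Nonempty := ⟨1, hrS (mem_Icc.2 ⟨le_rfl, hr1⟩)⟩
  have hΛ : ∀ i ∈ S, 0 < Λ i := fun i hi => hpos i (mem_Icc.1 (hSN hi)).1 (mem_Icc.1 (hSN hi)).2
  have hsum : ∀ n : ℕ → ℕ, (∀ i, i ∉ S → n i = 0) → ∑ i ∈ Icc 1 N, n i = ∑ i ∈ S, n i :=
    fun n hn => (sum_subset hSN fun i _ hi => hn i hi).symm
  have hgS : ∀ i, i ∉ S → g i = 0 := fun i hi => hg ▸ greedyAlloc_eq_zero hS hi m
  refine ⟨by rw [hsum g hgS, hg, sum_greedyAlloc hS], hgS, fun n hn hnS => ?_⟩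
  rw [prod_eq_allocValue_of_subset hSN hnS, prod_eq_allocValue_of_subset hSN hgS, hg]
  exact allocValue_le_greedyAlloc hS hΛ m n (by rw [← hsum n hnS, hn])

/-- **Greedy is optimal over a prescribed subset containing the top `r` channels.**
If `S ⊆ {1, ..., N}` contains `{1, ..., r}` (with `r` the Witsenhausen index of
`(Λ_1, ..., Λ_q)`, `q = min(m, N)`), then the greedy block-filling allocation on `S`
attains the maximum of `∏_{i=1}^N (1 + Λ_i n_i/m)` over all integer allocations of
`m` blocks supported on `S`. -/
theorem greedy_optimal_on_subset
    (N m : ℕ) (hN : 1 ≤ N) (hm : 1 ≤ m) (Λ : ℕ → ℝ)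
    (hpos : ∀ i, 1 ≤ i → i ≤ N → 0 < Λ i)
    (hmono : ∀ i, 1 ≤ i → i + 1 ≤ N → Λ (i + 1) ≤ Λ i)
    (q : ℕ) (hq : q = min m N)
    (r : ℕ) (hr1 : 1 ≤ r) (hrq : r ≤ q)
    (hup : ∀ k, 1 ≤ k → k ≤ r →
      1 / Λ k < (1 / (k : ℝ)) * (1 + ∑ j ∈ Finset.Icc 1 k, 1 / Λ j))
    (hdown : ∀ k, r < k → k ≤ q →
      (1 / (k : ℝ)) * (1 + ∑ j ∈ Finset.Icc 1 k, 1 / Λ j) ≤ 1 / Λ k)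
    (S : Finset ℕ) (hSN : S ⊆ Finset.Icc 1 N) (hrS : Finset.Icc 1 r ⊆ S)
    (g : ℕ → ℕ) (hg : g = greedyAlloc Λ m S m) :
    (∑ i ∈ Finset.Icc 1 N, g i = m) ∧ (∀ i, i ∉ S → g i = 0) ∧
    (∀ n : ℕ → ℕ, (∑ i ∈ Finset.Icc 1 N, n i = m) → (∀ i, i ∉ S → n i = 0) →
      ∏ i ∈ Finset.Icc 1 N, (1 + Λ i * (n i : ℝ) / m)
        ≤ ∏ i ∈ Finset.Icc 1 N, (1 + Λ i * (g i : ℝ) / m)) :=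
  greedy_optimal_on_subset_general N m Λ hpos r hr1 S hSN hrS g hg
end

section
/- Let P_0 be the real 2×2 matrix with rows (3, 2) and (2, 3), and let a_1 := (√((5 − √21)/10), √((5 + √21)/10)) and a_2 := (√((5 + √21)/10), √((5 − √21)/10)) in ℝ². Then ‖a_1‖ = ‖a_2‖ = 1 and det(P_0) · det(P_0^{−1} + a_1 a_1ᵀ + a_2 a_2ᵀ) = 64/5. -/
open Matrix

/-!
`a₁ = (s, t)` and `a₂ = (t, s)` with `s² + t² = 1` and `s t = 1/5`. Hence
`a₁a₁ᵀ + a₂a₂ᵀ = [[1, 2/5], [2/5, 1]]`, which cancels the off-diagonal part of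
`P₀⁻¹ = [[3/5, -2/5], [-2/5, 3/5]]` and leaves `(8/5) I`; so the product of determinants
is `5 · (8/5)² = 64/5`.
-/

lemma EuclideanSpace.norm_eq_one_of_ofLp_eq {x : EuclideanSpace ℝ (Fin 2)} {u v : ℝ}
    (hx : x.ofLp = ![u, v]) (huv : u ^ 2 + v ^ 2 = 1) : ‖x‖ = 1 := by
  simp [EuclideanSpace.norm_eq, Fin.sum_univ_two, hx, huv]

lemma Matrix.vecMulVec_add_vecMulVec_swap {R : Type*} [CommRing R] (u v : R) :
    vecMulVec ![u, v] ![u, v] + vecMulVec ![v, u] ![v, u] =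
      !![u ^ 2 + v ^ 2, 2 * u * v; 2 * u * v, u ^ 2 + v ^ 2] := by
  ext i j
  fin_cases i <;> fin_cases j <;>
    simp only [vecMulVec_apply, Matrix.add_apply, of_apply, Fin.zero_eta, Fin.mk_one, cons_val_zero,
      cons_val_one, cons_val_fin_one] <;> ring

lemma Matrix.inv_three_two_two_three :
    (!![3, 2; 2, 3] : Matrix (Fin 2) (Fin 2) ℝ)⁻¹ = !![3 / 5, -2 / 5; -2 / 5, 3 / 5] := by
  refine inv_eq_right_inv ?_
  rw [mul_fin_two, one_fin_two]
  norm_num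

lemma Real.sqrt_twentyOne_le_five : √21 ≤ 5 := by
  rw [Real.sqrt_le_left (by norm_num)]
  norm_num

lemma Real.sqrt_five_sub_mul_sqrt_five_add :
    √((5 - √21) / 10) * √((5 + √21) / 10) = 1 / 5 := by
  have h21 : √21 ^ 2 = 21 := Real.sq_sqrt (by norm_num)
  rw [← Real.sqrt_mul (by linarith [sqrt_twentyOne_le_five]), Real.sqrt_eq_iff_mul_self_eq] <;>
    nlinarith

/-- **Optimal compressors in the scalar-measurement example.** With
`P₀ = [[3,2],[2,3]]`, the unit vectors `a₁ = (√((5−√21)/10), √((5+√21)/10))` and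
`a₂ = (√((5+√21)/10), √((5−√21)/10))` achieve
`det(P₀) · det(P₀⁻¹ + a₁a₁ᵀ + a₂a₂ᵀ) = 64/5 = 12.8`. -/
theorem optimal_example_value
    (P0 : Matrix (Fin 2) (Fin 2) ℝ) (hP0 : P0 = !![3, 2; 2, 3])
    (a1 a2 : EuclideanSpace ℝ (Fin 2))
    (ha1 : a1 = ![Real.sqrt ((5 - Real.sqrt 21) / 10), Real.sqrt ((5 + Real.sqrt 21) / 10)])
    (ha2 : a2 = ![Real.sqrt ((5 + Real.sqrt 21) / 10), Real.sqrt ((5 - Real.sqrt 21) / 10)]) :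
    ‖a1‖ = 1 ∧ ‖a2‖ = 1 ∧
    P0.det * (P0⁻¹ + vecMulVec a1 a1 + vecMulVec a2 a2).det = 64 / 5 := by
  have hsum : √((5 - √21) / 10) ^ 2 + √((5 + √21) / 10) ^ 2 = 1 := by
    rw [Real.sq_sqrt (by linarith [Real.sqrt_twentyOne_le_five]), Real.sq_sqrt (by positivity)]
    ring
  refine ⟨EuclideanSpace.norm_eq_one_of_ofLp_eq ha1 hsum,
    EuclideanSpace.norm_eq_one_of_ofLp_eq ha2 (by linarith), ?_⟩
  rw [hP0, ha1, ha2, add_assoc, vecMulVec_add_vecMulVec_swap, inv_three_two_two_three, hsum,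
    mul_assoc 2, Real.sqrt_five_sub_mul_sqrt_five_add]
  norm_num [det_fin_two_of]
end

section
/- Let P_0 be the real 2×2 matrix with rows (3, 2) and (2, 3), and let a_1 := (1/√2)(1, 1) and a_2 := (1/√2)(1, −1) in ℝ². Then det(P_0) · det(P_0^{−1} + a_1 a_1ᵀ + a_2 a_2ᵀ) = 12, and 12 < 64/5; hence the greedy choice of compressors (a_1 the top unit eigenvector of P_0 and a_2 the top unit eigenvector of the updated covariance P_1) is strictly suboptimal for the net information gain. -/
open Matrix

/-!
The greedy compressors `a₁ = (1, 1)/√2` and `a₂ = (1, -1)/√2` form an orthonormal basis of `ℝ²`,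
so `a₁a₁ᵀ + a₂a₂ᵀ = I` by Parseval. Hence
`det P₀ · det (P₀⁻¹ + I) = det (P₀ (P₀⁻¹ + I)) = det (I + P₀) = det [[4, 2], [2, 4]] = 12`.
-/

theorem Matrix.det_mul_det_nonsing_inv_add_one {n R : Type*} [Fintype n] [DecidableEq n]
    [CommRing R] (P : Matrix n n R) (hP : IsUnit P.det) :
    P.det * (P⁻¹ + 1).det = (1 + P).det := by
  rw [← det_mul, mul_add, mul_nonsing_inv P hP, mul_one]

theorem OrthonormalBasis.sum_vecMulVec_star_eq_one {ι n 𝕜 : Type*} [Fintype ι] [Fintype n]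
    [DecidableEq n] [RCLike 𝕜] (b : OrthonormalBasis ι 𝕜 (EuclideanSpace 𝕜 n)) :
    ∑ i, vecMulVec (b i).ofLp (star (b i).ofLp) = 1 := by
  ext j k
  have parseval := b.sum_inner_mul_inner (EuclideanSpace.single j 1) (EuclideanSpace.single k 1)
  simp only [EuclideanSpace.inner_single_left, EuclideanSpace.inner_single_right, map_one,
    one_mul, PiLp.single_apply] at parseval
  simpa [Matrix.sum_apply, vecMulVec_apply, one_apply, eq_comm] using parseval

theorem orthonormal_inv_sqrt_two_pair :
    Orthonormal ℝ ![!₂[1 / √2, 1 / √2], !₂[1 / √2, -(1 / √2)]] := by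
  have h2 : √2 * √2 = 2 := Real.mul_self_sqrt zero_le_two
  rw [orthonormal_iff_ite]
  simp only [Fin.forall_fin_two, PiLp.inner_apply, RCLike.inner_apply, conj_trivial,
    Fin.sum_univ_two, cons_val_zero, cons_val_one, cons_val_fin_one, ↓reduceIte, Fin.isValue,
    zero_ne_one, one_ne_zero, mul_neg, neg_mul, add_neg_cancel]
  field_simp
  norm_num [h2]

theorem vecMulVec_inv_sqrt_two_pair_add_eq_one :
    vecMulVec ![1 / √2, 1 / √2] ![1 / √2, 1 / √2] +
      vecMulVec ![1 / √2, -(1 / √2)] ![1 / √2, -(1 / √2)] = (1 : Matrix (Fin 2) (Fin 2) ℝ) := by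
  have hspan := orthonormal_inv_sqrt_two_pair.linearIndependent.span_eq_top_of_card_eq_finrank'
    (by simp)
  simpa [Fin.sum_univ_two] using
    (OrthonormalBasis.mk orthonormal_inv_sqrt_two_pair hspan.ge).sum_vecMulVec_star_eq_one

/-- **The greedy policy is strictly suboptimal in the scalar-measurement example.**
With `P₀ = [[3,2],[2,3]]` and the greedy compressors `a₁ = (1/√2)(1,1)` (top unit
eigenvector of `P₀`) and `a₂ = (1/√2)(1,−1)` (top unit eigenvector of the updated
covariance `P₁`), one has `det(P₀) · det(P₀⁻¹ + a₁a₁ᵀ + a₂a₂ᵀ) = 12 < 64/5`. -/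
theorem greedy_example_suboptimal
    (P0 : Matrix (Fin 2) (Fin 2) ℝ) (hP0 : P0 = !![3, 2; 2, 3])
    (a1 a2 : EuclideanSpace ℝ (Fin 2))
    (ha1 : a1 = ![1 / Real.sqrt 2, 1 / Real.sqrt 2])
    (ha2 : a2 = ![1 / Real.sqrt 2, -(1 / Real.sqrt 2)]) :
    P0.det * (P0⁻¹ + vecMulVec a1 a1 + vecMulVec a2 a2).det = 12 ∧
    (12 : ℝ) < 64 / 5 := by
  subst hP0
  have hdet : IsUnit (!![3, 2; 2, 3] : Matrix (Fin 2) (Fin 2) ℝ).det := by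
    norm_num [det_fin_two_of]
  refine ⟨?_, by norm_num⟩
  rw [ha1, ha2, add_assoc, vecMulVec_inv_sqrt_two_pair_add_eq_one,
    det_mul_det_nonsing_inv_add_one _ hdet, det_fin_two]
  norm_num
end

section
/- For α > 0 define g(α) := √α (1 + √α)(1 + √α + α) and h(α) := (1 + α)². Then for every α > 0, g(α) = det(D_g(α)) and h(α) = det(D_a(α)), where D_g(α) := Diag(1 + √α + α, √α + α) and D_a(α) := (1 + α)·I_2; and the ratio h(α)/g(α) tends to +∞ as α → 0⁺. Consequently, the ratio of det(P_2) under the greedy policy (namely 1/g(α)) to det(P_2) under the alternating policy (namely 1/h(α)) is unbounded as α → 0⁺. -/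
open Matrix Filter Topology

theorem Filter.Tendsto.div_nhdsGT_zero_of_pos {α : Type*} {l : Filter α} {f g : α → ℝ} {C : ℝ}
    (hC : 0 < C) (hf : Tendsto f l (𝓝 C)) (hg : Tendsto g l (𝓝[>] 0)) :
    Tendsto (fun x => f x / g x) l atTop := by
  simp only [div_eq_mul_inv]
  exact hf.pos_mul_atTop hC (tendsto_inv_nhdsGT_zero.comp hg)

theorem Real.sqrt_mul_one_add_sqrt {α : ℝ} (hα : 0 ≤ α) : √α * (1 + √α) = √α + α := by
  rw [mul_one_add, Real.mul_self_sqrt hα]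

theorem tendsto_sqrt_mul_one_add_sqrt_mul_nhdsGT_zero :
    Tendsto (fun α : ℝ => √α * (1 + √α) * (1 + √α + α)) (𝓝[>] 0) (𝓝[>] 0) := by
  refine tendsto_nhdsWithin_of_tendsto_nhds_of_eventually_within _ ?_ ?_
  · have hcont : Continuous fun α : ℝ => √α * (1 + √α) * (1 + √α + α) := by fun_prop
    simpa using (hcont.tendsto 0).mono_left nhdsWithin_le_nhds
  · filter_upwards [self_mem_nhdsWithin] with α (hα : 0 < α)
    have : 0 < √α := Real.sqrt_pos.2 hα
    exact Set.mem_Ioi.2 (by positivity)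

/-- **The greedy policy is arbitrarily worse than the alternating policy.**
For `α > 0` let `g(α) := √α (1 + √α)(1 + √α + α)` and `h(α) := (1 + α)²`. Then
`g(α)` is the determinant of `D_g(α) = Diag(1 + √α + α, √α + α)` (the inverse
posterior covariance under the greedy policy) and `h(α)` is the determinant of
`D_a(α) = (1 + α) I₂` (under the alternating policy), and `h(α)/g(α) → +∞` as
`α → 0⁺`; hence the ratio of `det(P₂)` under the greedy policy (`1/g(α)`) to that
under the alternating policy (`1/h(α)`) is unbounded as `α → 0⁺`. -/
theorem greedy_arbitrarily_worse
    (g h : ℝ → ℝ)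
    (hg : ∀ α, g α = Real.sqrt α * (1 + Real.sqrt α) * (1 + Real.sqrt α + α))
    (hh : ∀ α, h α = (1 + α) ^ 2) :
    (∀ α : ℝ, 0 < α →
      g α = (Matrix.diagonal ![1 + Real.sqrt α + α, Real.sqrt α + α]).det ∧
      h α = ((1 + α) • (1 : Matrix (Fin 2) (Fin 2) ℝ)).det) ∧
    Tendsto (fun α => h α / g α) (nhdsWithin 0 (Set.Ioi 0)) atTop := by
  obtain rfl : g = fun α => √α * (1 + √α) * (1 + √α + α) := funext hg
  obtain rfl : h = fun α => (1 + α) ^ 2 := funext hh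
  refine ⟨fun α hα => ⟨?_, ?_⟩, ?_⟩
  · simp [det_diagonal, Fin.prod_univ_two, Real.sqrt_mul_one_add_sqrt hα.le, mul_comm]
  · simp
  · have hh1 : Tendsto (fun α : ℝ => (1 + α) ^ 2) (𝓝[>] 0) (𝓝 1) := by
      simpa using ((by fun_prop : Continuous fun α : ℝ => (1 + α) ^ 2).tendsto 0).mono_left
        nhdsWithin_le_nhds
    exact hh1.div_nhdsGT_zero_of_pos one_pos tendsto_sqrt_mul_one_add_sqrt_mul_nhdsGT_zero
end
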